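/- Let f and g be measurable functions on ℝⁿ with f ∈ L^{n/α,∞}(ℝⁿ) (weak Lebesgue space) and g ∈ L^{n/(n−α),1}(ℝⁿ) (Lorentz space with second exponent 1), where 0 < α < n. Then the convolution f∗g is bounded and ‖f∗g‖_{L^∞(ℝⁿ)} ≤ C ‖f‖_{L^{n/α,∞}} ‖g‖_{L^{n/(n−α),1}} for a constant C depending only on n and α. -/

import Mathlib

open MeasureTheory
open scoped ENNReal NNReal

noncomputable section

variable {n : ℕ}

/-- distribution function of `f`. -/
noncomputable def distFn (f : EuclideanSpace ℝ (Fin n) → ℝ) (lam : ℝ≥0∞) : ℝ≥0∞ :=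
  volume {x : EuclideanSpace ℝ (Fin n) | lam < ‖f x‖₊}

/-- weak `L^p` (i.e. `L^{p,∞}`) quasi-norm: `sup_{λ>0} λ·μ{|f|>λ}^{1/p}`. -/
noncomputable def wLpNorm (p : ℝ) (f : EuclideanSpace ℝ (Fin n) → ℝ) : ℝ≥0∞ :=
  ⨆ lam : ℝ≥0∞, lam * (distFn f lam) ^ (1 / p)

/-- Lorentz `L^{p,1}` norm: `∫₀^∞ μ{|f|>λ}^{1/p} dλ`. -/
noncomputable def lorentz1Norm (p : ℝ) (f : EuclideanSpace ℝ (Fin n) → ℝ) : ℝ≥0∞ :=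
  ∫⁻ lam in Set.Ioi (0:ℝ), (distFn f (ENNReal.ofReal lam)) ^ (1 / p)

/-- `∫_{t₀}^∞ t^{-p} dt = t₀^{1-p}/(p-1)` in `ℝ≥0∞`. -/
lemma lint_rpow_tail {p t₀ : ℝ} (hp : 1 < p) (ht₀ : 0 < t₀) :
    ∫⁻ t in Set.Ioi t₀, (ENNReal.ofReal t) ^ (-p) =
      ENNReal.ofReal (t₀ ^ (1 - p) / (p - 1)) := by
  have hlt : -p < -1 := by linarith
  have h1 : ∀ᵐ t ∂(volume.restrict (Set.Ioi t₀)),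
      (ENNReal.ofReal t) ^ (-p) = ENNReal.ofReal (t ^ (-p)) := by
    filter_upwards [ae_restrict_mem measurableSet_Ioi] with t ht
    rw [← ENNReal.ofReal_rpow_of_pos (ht₀.trans ht)]
  rw [lintegral_congr_ae h1,
    ← MeasureTheory.ofReal_integral_eq_lintegral_ofReal
      (integrableOn_Ioi_rpow_of_lt hlt ht₀)
      (by filter_upwards [ae_restrict_mem measurableSet_Ioi] with t ht using
        Real.rpow_nonneg ((ht₀.trans ht)).le _),
    integral_Ioi_rpow_of_lt hlt ht₀]
  congr 1
  rw [show -p + 1 = -(p - 1) by ring, show t₀ ^ (1 - p) = t₀ ^ (-(p-1)) by ring_nf,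
    div_neg, neg_div, neg_neg]

/-- the elementary estimate `∫₀^∞ min(A, N^p t^{-p}) dt ≤ (p/(p-1)) N A^{1-1/p}`. -/
lemma minBound {p : ℝ} (hp : 1 < p) (A N : ℝ≥0∞) :
    ∫⁻ t in Set.Ioi (0:ℝ), min A (N ^ p * (ENNReal.ofReal t) ^ (-p)) ≤
      ENNReal.ofReal (p / (p - 1)) * N * A ^ (1 - 1/p) := by
  have hp0 : 0 < p := by linarith
  have hp1 : 0 < p - 1 := by linarith
  have hC0 : ENNReal.ofReal (p / (p - 1)) ≠ 0 := by
    simp only [ne_eq, ENNReal.ofReal_eq_zero, not_le]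
    positivity
  have hexp : 0 < 1 - 1/p := by
    have : 1/p < 1 := by rw [div_lt_one hp0]; linarith
    linarith
  rcases eq_or_ne A 0 with rfl | hA0
  · have hz : ∀ x : ℝ≥0∞, min 0 x = 0 := fun x => min_eq_left (zero_le (a := x))
    simp only [hz, lintegral_zero]
    exact zero_le
  rcases eq_or_ne N 0 with rfl | hN0
  · have hz : ∀ t : ℝ, min A ((0:ℝ≥0∞) ^ p * (ENNReal.ofReal t) ^ (-p)) = 0 := by
      intro t
      rw [ENNReal.zero_rpow_of_pos hp0, zero_mul]
      exact min_eq_right zero_le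
    simp only [hz, lintegral_zero]
    exact zero_le
  rcases eq_or_ne A ⊤ with rfl | hAtop
  · have : (⊤:ℝ≥0∞) ^ (1 - 1/p) = ⊤ := ENNReal.top_rpow_of_pos hexp
    rw [this, ENNReal.mul_top]
    · exact le_top
    · exact mul_ne_zero hC0 hN0
  rcases eq_or_ne N ⊤ with rfl | hNtop
  · have hA : A ^ (1 - 1/p) ≠ 0 := by
      simp [ENNReal.rpow_eq_zero_iff, hA0, hAtop]
    rw [ENNReal.mul_top hC0, ENNReal.top_mul hA]
    exact le_top
  -- main case
  set T : ℝ≥0∞ := N * A ^ (-(1/p)) with hT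
  have hApow0 : A ^ (-(1/p)) ≠ 0 := by simp [ENNReal.rpow_eq_zero_iff, hA0, hAtop]
  have hApowtop : A ^ (-(1/p)) ≠ ⊤ := by simp [ENNReal.rpow_eq_top_iff, hA0, hAtop]
  have hTne0 : T ≠ 0 := mul_ne_zero hN0 hApow0
  have hTnetop : T ≠ ⊤ := ENNReal.mul_ne_top hNtop hApowtop
  set t₀ := T.toReal with ht₀def
  have ht₀ : 0 < t₀ := ENNReal.toReal_pos hTne0 hTnetop
  have hsplit : Set.Ioi (0:ℝ) = Set.Ioc 0 t₀ ∪ Set.Ioi t₀ :=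
    (Set.Ioc_union_Ioi_eq_Ioi ht₀.le).symm
  rw [hsplit, lintegral_union measurableSet_Ioi (Set.Ioc_disjoint_Ioi le_rfl)]
  have h1 : ∫⁻ t in Set.Ioc (0:ℝ) t₀, min A (N ^ p * (ENNReal.ofReal t) ^ (-p))
      ≤ N * A ^ (1 - 1/p) := by
    calc ∫⁻ t in Set.Ioc (0:ℝ) t₀, min A (N ^ p * (ENNReal.ofReal t) ^ (-p))
        ≤ ∫⁻ _ in Set.Ioc (0:ℝ) t₀, A := lintegral_mono fun t => min_le_left _ _
      _ = A * volume (Set.Ioc (0:ℝ) t₀) := setLIntegral_const _ _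
      _ = A * T := by
          rw [Real.volume_Ioc, sub_zero, ht₀def, ENNReal.ofReal_toReal hTnetop]
      _ = N * (A ^ (1:ℝ) * A ^ (-(1/p))) := by rw [hT, ENNReal.rpow_one]; ring
      _ = N * A ^ (1 - 1/p) := by
          rw [← ENNReal.rpow_add _ _ hA0 hAtop, show (1:ℝ) + -(1/p) = 1 - 1/p by ring]
  have h2 : ∫⁻ t in Set.Ioi t₀, min A (N ^ p * (ENNReal.ofReal t) ^ (-p))
      ≤ ENNReal.ofReal (1/(p-1)) * N * A ^ (1 - 1/p) := by
    have hmeas : Measurable fun t : ℝ => (ENNReal.ofReal t) ^ (-p) := by fun_prop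
    calc ∫⁻ t in Set.Ioi t₀, min A (N ^ p * (ENNReal.ofReal t) ^ (-p))
        ≤ ∫⁻ t in Set.Ioi t₀, N ^ p * (ENNReal.ofReal t) ^ (-p) :=
          lintegral_mono fun t => min_le_right _ _
      _ = N ^ p * ∫⁻ t in Set.Ioi t₀, (ENNReal.ofReal t) ^ (-p) :=
          lintegral_const_mul _ hmeas
      _ = N ^ p * ENNReal.ofReal (t₀ ^ (1 - p) / (p - 1)) := by rw [lint_rpow_tail hp ht₀]
      _ = ENNReal.ofReal (1/(p-1)) * N * A ^ (1 - 1/p) := by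
          rw [show t₀ ^ (1 - p) / (p - 1) = t₀ ^ (1-p) * (1/(p-1)) by ring,
            ENNReal.ofReal_mul (Real.rpow_nonneg ht₀.le _),
            show ENNReal.ofReal (t₀ ^ (1-p)) = T ^ (1-p) by
              rw [← ENNReal.ofReal_rpow_of_pos ht₀, ht₀def, ENNReal.ofReal_toReal hTnetop]]
          rw [hT, ENNReal.mul_rpow_of_ne_top hNtop hApowtop, ← ENNReal.rpow_mul]
          rw [show -(1/p) * (1-p) = 1 - 1/p by field_simp; ring]
          rw [show N ^ p * (N ^ (1-p) * A ^ (1 - 1/p) * ENNReal.ofReal (1/(p-1)))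
              = (N ^ p * N ^ (1-p)) * A ^ (1 - 1/p) * ENNReal.ofReal (1/(p-1)) by ring,
            ← ENNReal.rpow_add _ _ hN0 hNtop, show p + (1-p) = 1 by ring, ENNReal.rpow_one]
          ring
  calc _ ≤ N * A ^ (1 - 1/p) + ENNReal.ofReal (1/(p-1)) * N * A ^ (1 - 1/p) :=
        add_le_add h1 h2
    _ = (ENNReal.ofReal 1 + ENNReal.ofReal (1/(p-1))) * N * A ^ (1 - 1/p) := by
        rw [ENNReal.ofReal_one]; ring
    _ = ENNReal.ofReal (p / (p - 1)) * N * A ^ (1 - 1/p) := by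
        rw [← ENNReal.ofReal_add one_pos.le (by positivity)]
        congr 2
        field_simp
        ring_nf

/-- the distribution function at a real level. -/
lemma distFn_eq {f : EuclideanSpace ℝ (Fin n) → ℝ} {t : ℝ} (ht : 0 ≤ t) :
    distFn f (ENNReal.ofReal t) = volume {y | t < |f y|} := by
  unfold distFn
  congr 1
  ext y
  simp only [Set.mem_setOf_eq, ← enorm_eq_nnnorm, Real.enorm_eq_ofReal_abs]
  exact ENNReal.ofReal_lt_ofReal_iff_of_nonneg ht

/-- the key distribution-function bound from the weak norm. -/
lemma distFn_le {p : ℝ} (hp : 1 < p) (f : EuclideanSpace ℝ (Fin n) → ℝ) {t : ℝ} (ht : 0 < t) :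
    distFn f (ENNReal.ofReal t) ≤ (wLpNorm p f) ^ p * (ENNReal.ofReal t) ^ (-p) := by
  have hp0 : 0 < p := by linarith
  set lam : ℝ≥0∞ := ENNReal.ofReal t with hlam
  have hlam0 : lam ≠ 0 := by simp [hlam, ht]
  have hlamtop : lam ≠ ⊤ := ENNReal.ofReal_ne_top
  set d := distFn f lam with hd
  have hle : lam * d ^ (1/p) ≤ wLpNorm p f :=
    le_iSup (fun l : ℝ≥0∞ => l * (distFn f l) ^ (1 / p)) lam
  rcases eq_or_ne (wLpNorm p f) 0 with hN | hN
  · rw [hN] at hle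
    have : d ^ (1/p) = 0 := by
      have h0 : lam * d ^ (1/p) = 0 := le_antisymm hle zero_le
      exact (mul_eq_zero.mp h0).resolve_left hlam0
    have hd0 : d = 0 := by
      rcases (ENNReal.rpow_eq_zero_iff.mp this) with ⟨h, _⟩ | ⟨_, h⟩
      · exact h
      · exfalso; simp at h; linarith [one_div_pos.mpr hp0, h]
    rw [hd0]
    exact zero_le
  · have hstep : d ^ (1/p) ≤ lam⁻¹ * wLpNorm p f := by
      have := mul_le_mul_right hle lam⁻¹
      rwa [← mul_assoc, ENNReal.inv_mul_cancel hlam0 hlamtop, one_mul] at this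
    have hd' : d = (d ^ (1/p)) ^ p := by
      rw [← ENNReal.rpow_mul, one_div_mul_cancel hp0.ne', ENNReal.rpow_one]
    calc d = (d ^ (1/p)) ^ p := hd'
      _ ≤ (lam⁻¹ * wLpNorm p f) ^ p := ENNReal.rpow_le_rpow hstep hp0.le
      _ = (wLpNorm p f) ^ p * lam ^ (-p) := by
          rw [ENNReal.mul_rpow_of_ne_zero (by simp [hlamtop]) hN,
            ENNReal.inv_rpow, ← ENNReal.rpow_neg, mul_comm]

/-- weak Hölder: `∫_S |f| ≤ (p/(p-1)) ‖f‖_{p,∞} |S|^{1-1/p}`. -/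
lemma weak_holder {p : ℝ} (hp : 1 < p) (f : EuclideanSpace ℝ (Fin n) → ℝ)
    (hf : Measurable f) (S : Set (EuclideanSpace ℝ (Fin n))) :
    ∫⁻ y in S, (‖f y‖₊ : ℝ≥0∞) ≤
      ENNReal.ofReal (p / (p - 1)) * wLpNorm p f * (volume S) ^ (1 - 1/p) := by
  have habs : ∀ y, ((‖f y‖₊ : ℝ≥0∞)) = ENNReal.ofReal |f y| := fun y =>
    Real.enorm_eq_ofReal_abs _
  calc ∫⁻ y in S, (‖f y‖₊ : ℝ≥0∞)
      = ∫⁻ y in S, ENNReal.ofReal |f y| := lintegral_congr fun y => habs y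
    _ = ∫⁻ t in Set.Ioi (0:ℝ), (volume.restrict S) {y | t < |f y|} :=
        lintegral_eq_lintegral_meas_lt _ (Filter.Eventually.of_forall fun y => abs_nonneg _)
          hf.abs.aemeasurable
    _ ≤ ∫⁻ t in Set.Ioi (0:ℝ),
          min (volume S) ((wLpNorm p f) ^ p * (ENNReal.ofReal t) ^ (-p)) := by
        apply lintegral_mono_ae
        filter_upwards [ae_restrict_mem measurableSet_Ioi] with t ht
        have hmS : MeasurableSet {y | t < |f y|} := measurableSet_lt measurable_const hf.abs
        rw [Measure.restrict_apply hmS]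
        refine le_min (measure_mono Set.inter_subset_right) ?_
        calc volume ({y | t < |f y|} ∩ S) ≤ volume {y | t < |f y|} :=
              measure_mono Set.inter_subset_left
          _ = distFn f (ENNReal.ofReal t) := (distFn_eq (le_of_lt ht)).symm
          _ ≤ _ := distFn_le hp f ht
    _ ≤ _ := minBound hp _ _

/-- endpoint O'Neil convolution inequality
`‖f∗g‖_{L^∞} ≤ C ‖f‖_{L^{n/α,∞}} ‖g‖_{L^{n/(n−α),1}}`. -/
theorem stmt2 (n : ℕ) (α : ℝ) (hα : 0 < α) (hαn : α < n) :
    ∃ C : ℝ, 0 < C ∧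
      ∀ f g : EuclideanSpace ℝ (Fin n) → ℝ,
        Measurable f → Measurable g →
        eLpNorm (fun x => ∫ y, f y * g (x - y)) ∞
            (volume : Measure (EuclideanSpace ℝ (Fin n)))
          ≤ ENNReal.ofReal C * wLpNorm (n / α) f * lorentz1Norm (n / (n - α)) g := by
  have hn : (0:ℝ) < n := lt_trans hα hαn
  have hp : 1 < (n:ℝ) / α := (one_lt_div hα).mpr hαn
  set p : ℝ := (n:ℝ) / α with hpdef
  have hp1 : 0 < p - 1 := by linarith
  refine ⟨p / (p - 1), by positivity, ?_⟩
  intro f g hf hg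
  set N := wLpNorm p f with hN
  set L := lorentz1Norm ((n:ℝ) / ((n:ℝ) - α)) g with hL
  have hexp : 1 - 1/p = 1 / ((n:ℝ) / ((n:ℝ) - α)) := by
    rw [hpdef, one_div_div, one_div_div]
    field_simp
  have key : ∀ x : EuclideanSpace ℝ (Fin n),
      (‖∫ y, f y * g (x - y)‖₊ : ℝ≥0∞) ≤ ENNReal.ofReal (p / (p - 1)) * N * L := by
    intro x
    have hgx : Measurable fun y : EuclideanSpace ℝ (Fin n) => g (x - y) :=
      hg.comp (measurable_const.sub measurable_id)
    have hF : Measurable fun y : EuclideanSpace ℝ (Fin n) => (‖f y‖₊ : ℝ≥0∞) :=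
      hf.nnnorm.coe_nnreal_ennreal
    have hG : Measurable fun y : EuclideanSpace ℝ (Fin n) => ENNReal.ofReal |g (x - y)| :=
      ENNReal.measurable_ofReal.comp hgx.abs
    set ν := volume.withDensity fun y : EuclideanSpace ℝ (Fin n) => (‖f y‖₊ : ℝ≥0∞) with hν
    calc (‖∫ y, f y * g (x - y)‖₊ : ℝ≥0∞)
        ≤ ∫⁻ y, ‖f y * g (x - y)‖₊ := enorm_integral_le_lintegral_enorm _
      _ = ∫⁻ y, (‖f y‖₊ : ℝ≥0∞) * ENNReal.ofReal |g (x - y)| := by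
          refine lintegral_congr fun y => ?_
          rw [nnnorm_mul, ENNReal.coe_mul, ← enorm_eq_nnnorm (g (x - y)), Real.enorm_eq_ofReal_abs (g (x - y))]
      _ = ∫⁻ y, ENNReal.ofReal |g (x - y)| ∂ν := by
          rw [hν, lintegral_withDensity_eq_lintegral_mul volume hF hG]
          rfl
      _ = ∫⁻ t in Set.Ioi (0:ℝ), ν {y | t < |g (x - y)|} :=
          lintegral_eq_lintegral_meas_lt ν (Filter.Eventually.of_forall fun y => abs_nonneg _)
            hgx.abs.aemeasurable
      _ ≤ ∫⁻ t in Set.Ioi (0:ℝ),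
            ENNReal.ofReal (p / (p - 1)) * N * (distFn g (ENNReal.ofReal t)) ^ (1 - 1/p) := by
          apply lintegral_mono_ae
          filter_upwards [ae_restrict_mem measurableSet_Ioi] with t ht
          have hmS : MeasurableSet {y : EuclideanSpace ℝ (Fin n) | t < |g (x - y)|} :=
            measurableSet_lt measurable_const hgx.abs
          rw [hν, withDensity_apply _ hmS]
          have hvol : volume {y : EuclideanSpace ℝ (Fin n) | t < |g (x - y)|}
              = distFn g (ENNReal.ofReal t) := by
            have hpre : {y : EuclideanSpace ℝ (Fin n) | t < |g (x - y)|}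
                = (fun y => x - y) ⁻¹' {z | t < |g z|} := rfl
            rw [hpre, (Measure.measurePreserving_sub_left volume x).measure_preimage
              (measurableSet_lt measurable_const hg.abs).nullMeasurableSet,
              distFn_eq (le_of_lt ht)]
          calc ∫⁻ y in {y | t < |g (x - y)|}, (‖f y‖₊ : ℝ≥0∞)
              ≤ ENNReal.ofReal (p / (p - 1)) * N
                * (volume {y : EuclideanSpace ℝ (Fin n) | t < |g (x - y)|}) ^ (1 - 1/p) :=
                weak_holder hp f hf _
            _ = _ := by rw [hvol]
      _ = ENNReal.ofReal (p / (p - 1)) * N * L := by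
          have hanti : Antitone fun t : ℝ => distFn g (ENNReal.ofReal t) := by
            intro s t hst
            exact measure_mono fun z hz =>
              lt_of_le_of_lt (ENNReal.ofReal_le_ofReal hst) hz
          have hmd : Measurable fun t : ℝ => (distFn g (ENNReal.ofReal t)) ^ (1 - 1/p) :=
            (hanti.measurable).pow_const _
          rw [lintegral_const_mul _ hmd, hL, lorentz1Norm, hexp]
  rw [eLpNorm_exponent_top]
  exact essSup_le_of_ae_le _ (Filter.Eventually.of_forall key)
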